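/- Let X, Y, C be mutually independent, W_i = X_i ∧ Y_i ∧ C_i, δ_i = 1_{W_i = X_i ∧ Y_i} for iid replicates, F the cdf of X, G the cdf of C, H the cdf of W. For every θ with H(θ) < 1, sup_{0 ≤ t ≤ θ} |(1/n)∑_{i=1}^n 1_{X_i ≤ t} δ_i/(1 − G(W_i−)) − F(t)| → 0 almost surely as n → ∞. -/

import Mathlib

open MeasureTheory ProbabilityTheory Filter Set Function
open scoped Topology ENNReal

/-!
For a Borel set `s ⊆ (-∞, θ]` the summands `1_{Xᵢ ∈ s} δᵢ / (1 - G(Wᵢ-))` are iid and bounded by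
`1 / (1 - G(θ))`, where `G(θ) ≤ H(θ) < 1`. Since `C` is independent of `(X, Y)`, integrating over
`C` first turns `δ = 1_{X ∧ Y ≤ C}` into `P(C ≥ X ∧ Y) = 1 - G((X ∧ Y)-)`, which cancels the
denominator: the summands have mean `P(X ∈ s)`, and the strong law gives almost sure convergence
for `s = (-∞, t]` and `s = (-∞, t)`.

Both the estimator and `F` are monotone in `t`. Take an `ε`-quantile grid `a = s₀, …, sₘ = θ` of
`F` in `[a, θ]`, one with `F(sⱼ₊₁-) ≤ F(sⱼ) + ε`. Bracketing `t` between consecutive grid points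
bounds the error at `t` by twice the errors at the grid points of the estimates of `F(sⱼ)` and
`F(sⱼ-)`. Hence convergence on the countably many points of the `1/(k+1)`-quantile grids, `k ∈ ℕ`,
already gives uniform convergence on `[0, θ]`, as in the proof of the Glivenko–Cantelli theorem.
-/

theorem abs_sub_le_two_mul_of_grid {S Sm F : ℝ → ℝ} (hS : Monotone S)
    (hSm : ∀ t u, t < u → S t ≤ Sm u) (hF : Monotone F) {s : ℕ → ℝ} {m : ℕ} {ε t : ℝ}
    (hincr : ∀ j, leftLim F (s (j + 1)) ≤ F (s j) + ε)
    (hgrid : ∀ j ∈ Iic m, |S (s j) - F (s j)| ≤ ε ∧ |Sm (s j) - leftLim F (s j)| ≤ ε)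
    (ht : t ∈ Icc (s 0) (s m)) : |S t - F t| ≤ 2 * ε := by
  classical
  rcases ht.2.eq_or_lt with rfl | htm
  · linarith [(hgrid m (le_refl m)).1, abs_nonneg (S (s m) - F (s m))]
  set j := Nat.findGreatest (fun i => s i ≤ t) m
  have hjt : s j ≤ t := Nat.findGreatest_spec (P := fun i => s i ≤ t) (Nat.zero_le m) ht.1
  have hjm : j < m :=
    (Nat.findGreatest_le m).lt_of_ne fun (h : j = m) => by rw [h] at hjt; linarith
  have htj : t < s (j + 1) :=
    not_le.1 (Nat.findGreatest_is_greatest (P := fun i => s i ≤ t) j.lt_succ_self hjm)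
  have hS_ge : S (s j) ≤ S t := hS hjt
  have hS_le : S t ≤ Sm (s (j + 1)) := hSm t _ htj
  have hF_ge : F (s j) ≤ F t := hF hjt
  have hF_le : F t ≤ leftLim F (s (j + 1)) := hF.le_leftLim htj
  have hj := abs_le.1 (hgrid j hjm.le).1
  have hj₁ := abs_le.1 (hgrid (j + 1) hjm).2
  rw [abs_le]
  constructor <;> linarith [hincr j]

namespace StieltjesFunction

/-- The point of `[a, θ]` where `F` first reaches `F a + j * ε` (or `θ`, if it does not). -/
noncomputable def quantileGrid (F : StieltjesFunction ℝ) (a θ ε : ℝ) (j : ℕ) : ℝ :=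
  sSup (insert a {x | x ≤ θ ∧ F x < F a + j * ε})

variable {F : StieltjesFunction ℝ} {a θ ε : ℝ}

lemma bddAbove_quantileGrid_set (haθ : a ≤ θ) (j : ℕ) :
    BddAbove (insert a {x | x ≤ θ ∧ F x < F a + j * ε}) :=
  ⟨θ, by rintro x (rfl | ⟨hx, -⟩) <;> assumption⟩

lemma quantileGrid_mem_Icc (haθ : a ≤ θ) (j : ℕ) : F.quantileGrid a θ ε j ∈ Icc a θ :=
  ⟨le_csSup (bddAbove_quantileGrid_set haθ j) (mem_insert a _),
    csSup_le (insert_nonempty _ _) (by rintro x (rfl | ⟨hx, -⟩) <;> assumption)⟩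

lemma quantileGrid_zero (haθ : a ≤ θ) : F.quantileGrid a θ ε 0 = a := by
  refine le_antisymm (csSup_le (insert_nonempty _ _) ?_) (quantileGrid_mem_Icc haθ 0).1
  rintro x (rfl | ⟨-, hx⟩)
  · exact le_rfl
  · simp only [CharP.cast_eq_zero, zero_mul, add_zero] at hx
    exact (F.mono.reflect_lt hx).le

lemma quantileGrid_eq_right (haθ : a ≤ θ) {m : ℕ} (hm : F θ < F a + m * ε) :
    F.quantileGrid a θ ε m = θ :=
  le_antisymm (quantileGrid_mem_Icc haθ m).2
    (le_csSup (bddAbove_quantileGrid_set haθ m) (Or.inr ⟨le_rfl, hm⟩))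

lemma add_mul_le_quantileGrid (haθ : a ≤ θ) {j : ℕ} (hj : F.quantileGrid a θ ε j < θ) :
    F a + j * ε ≤ F (F.quantileGrid a θ ε j) := by
  set s := F.quantileGrid a θ ε j
  refine ge_of_tendsto ((F.right_continuous s).mono Ioi_subset_Ici_self)
    (mem_of_superset (Ioc_mem_nhdsGT hj) fun x ⟨hsx, hxθ⟩ => ?_)
  by_contra hx
  exact (le_csSup (bddAbove_quantileGrid_set haθ j) (Or.inr ⟨hxθ, not_le.1 hx⟩)).not_gt hsx

lemma leftLim_quantileGrid_le (haθ : a ≤ θ) (hε : 0 ≤ ε) (j : ℕ) :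
    leftLim F (F.quantileGrid a θ ε j) ≤ F a + j * ε := by
  rw [F.mono.leftLim_eq_sSup]
  refine csSup_le (nonempty_Iio.image _) ?_
  rintro _ ⟨u, hu, rfl⟩
  obtain ⟨x, hx, hux⟩ := exists_lt_of_lt_csSup (insert_nonempty _ _) (mem_Iio.1 hu)
  refine (F.mono hux.le).trans ?_
  rcases hx with rfl | ⟨-, hx⟩
  · exact le_add_of_nonneg_right (by positivity)
  · exact hx.le

lemma leftLim_quantileGrid_succ_le (haθ : a ≤ θ) (hε : 0 ≤ ε) (j : ℕ) :
    leftLim F (F.quantileGrid a θ ε (j + 1)) ≤ F (F.quantileGrid a θ ε j) + ε := by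
  rcases (quantileGrid_mem_Icc haθ j).2.eq_or_lt with hj | hj
  · calc leftLim F (F.quantileGrid a θ ε (j + 1))
        ≤ F θ := F.mono.leftLim_le (quantileGrid_mem_Icc haθ _).2
      _ ≤ F (F.quantileGrid a θ ε j) + ε := by rw [hj]; linarith
  · have := leftLim_quantileGrid_le (F := F) haθ hε (j + 1)
    have := add_mul_le_quantileGrid haθ hj
    push_cast at *
    linarith

theorem exists_countable_tendstoUniformlyOn (F : StieltjesFunction ℝ) (a θ : ℝ) :
    ∃ D : Set ℝ, D.Countable ∧ D ⊆ Icc a θ ∧ ∀ S Sm : ℕ → ℝ → ℝ, (∀ n, Monotone (S n)) →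
      (∀ n t u, t < u → S n t ≤ Sm n u) →
      (∀ d ∈ D, Tendsto (S · d) atTop (𝓝 (F d)) ∧ Tendsto (Sm · d) atTop (𝓝 (leftLim F d))) →
      TendstoUniformlyOn S F atTop (Icc a θ) := by
  rcases lt_or_ge θ a with hθa | haθ
  · refine ⟨∅, countable_empty, empty_subset _, fun S Sm _ _ _ => ?_⟩
    rw [Icc_eq_empty_of_lt hθa]
    exact tendstoUniformlyOn_empty
  refine ⟨⋃ k : ℕ, range (F.quantileGrid a θ (1 / (k + 1))),
    countable_iUnion fun _ => countable_range _,
    iUnion_subset fun _ => range_subset_iff.2 (quantileGrid_mem_Icc haθ),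
    fun S Sm hS hSm hD => Metric.tendstoUniformlyOn_iff.2 fun ε hε => ?_⟩
  obtain ⟨k, hk⟩ := exists_nat_one_div_lt (half_pos hε)
  have hη : (0 : ℝ) < 1 / (k + 1) := Nat.one_div_pos_of_nat
  obtain ⟨m, hm⟩ := exists_nat_gt ((F θ - F a) / (1 / (k + 1)))
  rw [div_lt_iff₀ hη] at hm
  have hnear : ∀ᶠ n in atTop, ∀ j ∈ Iic m,
      |S n (F.quantileGrid a θ (1 / (k + 1)) j) - F (F.quantileGrid a θ (1 / (k + 1)) j)|
        ≤ 1 / (k + 1) ∧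
      |Sm n (F.quantileGrid a θ (1 / (k + 1)) j) - leftLim F (F.quantileGrid a θ (1 / (k + 1)) j)|
        ≤ 1 / (k + 1) := by
    refine (finite_Iic m).eventually_all.2 fun j _ => ?_
    obtain ⟨hSj, hSmj⟩ := hD _ (mem_iUnion.2 ⟨k, j, rfl⟩)
    filter_upwards [Metric.tendsto_nhds.1 hSj _ hη, Metric.tendsto_nhds.1 hSmj _ hη]
      with n h h'
    rw [← Real.dist_eq, ← Real.dist_eq]
    exact ⟨h.le, h'.le⟩
  filter_upwards [hnear] with n hn t ht
  rw [dist_comm, Real.dist_eq]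
  refine (abs_sub_le_two_mul_of_grid (hS n) (hSm n) F.mono
    (leftLim_quantileGrid_succ_le haθ hη.le) hn ?_).trans_lt (by linarith)
  rwa [quantileGrid_zero haθ, quantileGrid_eq_right haθ (by linarith)]

end StieltjesFunction

lemma TendstoUniformlyOn.tendsto_iSup_abs_sub {ι α : Type*} {l : Filter ι} {f : ι → α → ℝ}
    {g : α → ℝ} {s : Set α} (h : TendstoUniformlyOn f g l s) :
    Tendsto (fun n => ⨆ x ∈ s, |f n x - g x|) l (𝓝 0) := by
  refine Metric.tendsto_nhds.2 fun ε hε => ?_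
  filter_upwards [Metric.tendstoUniformlyOn_iff.1 h (ε / 2) (half_pos hε)] with n hn
  have hle : ⨆ x ∈ s, |f n x - g x| ≤ ε / 2 :=
    Real.iSup_le (fun x => Real.iSup_le (fun hx => by
      rw [abs_sub_comm, ← Real.dist_eq]; exact (hn x hx).le) (half_pos hε).le) (half_pos hε).le
  have h0 : 0 ≤ ⨆ x ∈ s, |f n x - g x| :=
    Real.iSup_nonneg fun x => Real.iSup_nonneg fun _ => abs_nonneg _
  rw [Real.dist_0_eq_abs, abs_of_nonneg h0]
  linarith

namespace ProbabilityTheory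

lemma leftLim_cdf (μ : Measure ℝ) [IsProbabilityMeasure μ] (x : ℝ) :
    leftLim (cdf μ) x = μ.real (Iio x) := by
  have h := (cdf μ).measure_Iio (tendsto_cdf_atBot μ) x
  rw [measure_cdf, sub_zero] at h
  rw [measureReal_def, h, ENNReal.toReal_ofReal]
  exact le_trans (cdf_nonneg μ (x - 1)) ((monotone_cdf μ).le_leftLim (by linarith))

lemma measureReal_Ici_eq_one_sub_leftLim_cdf (μ : Measure ℝ) [IsProbabilityMeasure μ] (x : ℝ) :
    μ.real (Ici x) = 1 - leftLim (cdf μ) x := by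
  rw [leftLim_cdf, ← compl_Iio, measureReal_compl measurableSet_Iio, probReal_univ]

lemma cdf_map {Ω : Type*} [MeasurableSpace Ω] {P : Measure Ω} [IsProbabilityMeasure P]
    {Z : Ω → ℝ} (hZ : Measurable Z) (t : ℝ) : cdf (P.map Z) t = P.real (Z ⁻¹' Iic t) := by
  have := Measure.isProbabilityMeasure_map (μ := P) hZ.aemeasurable
  rw [cdf_eq_real, map_measureReal_apply hZ measurableSet_Iic]

lemma leftLim_cdf_map {Ω : Type*} [MeasurableSpace Ω] {P : Measure Ω} [IsProbabilityMeasure P]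
    {Z : Ω → ℝ} (hZ : Measurable Z) (t : ℝ) :
    leftLim (cdf (P.map Z)) t = P.real (Z ⁻¹' Iio t) := by
  have := Measure.isProbabilityMeasure_map (μ := P) hZ.aemeasurable
  rw [leftLim_cdf, map_measureReal_apply hZ measurableSet_Iio]

/-- The weight `δ / (1 - G(w-))` of an observation `v = (x, y, c)`, where `w = x ∧ y ∧ c` and
`δ = 1_{x ∧ y ≤ c}`. -/
noncomputable def ipcwWeight (G : ℝ → ℝ) (v : ℝ × ℝ × ℝ) : ℝ :=
  (if min v.1 v.2.1 ≤ v.2.2 then 1 else 0) / (1 - leftLim G (min (min v.1 v.2.1) v.2.2))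

lemma measurable_ipcwWeight {G : ℝ → ℝ} (hG : Monotone G) : Measurable (ipcwWeight G) := by
  unfold ipcwWeight
  exact (Measurable.ite (measurableSet_le (by fun_prop) (by fun_prop)) measurable_const
    measurable_const).div (measurable_const.sub (hG.leftLim.measurable.comp (by fun_prop)))

lemma ipcwWeight_le (μ : Measure ℝ) {θ : ℝ} (hθ : cdf μ θ < 1) {v : ℝ × ℝ × ℝ} (hv : v.1 ≤ θ) :
    ipcwWeight (cdf μ) v ≤ (1 - cdf μ θ)⁻¹ := by
  unfold ipcwWeight
  split_ifs with hc
  · rw [min_eq_left hc, one_div]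
    have := (monotone_cdf μ).leftLim_le ((min_le_left v.1 v.2.1).trans hv)
    gcongr
  · simp only [zero_div, inv_nonneg, sub_nonneg]
    exact cdf_le_one μ θ

lemma ipcwWeight_nonneg (μ : Measure ℝ) (v : ℝ × ℝ × ℝ) : 0 ≤ ipcwWeight (cdf μ) v :=
  div_nonneg (by split_ifs <;> norm_num)
    (sub_nonneg.2 (((monotone_cdf μ).leftLim_le le_rfl).trans (cdf_le_one μ _)))

lemma norm_indicator_ipcwWeight_le (μ : Measure ℝ) {s : Set ℝ} {θ : ℝ} (hsθ : s ⊆ Iic θ)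
    (hθ : cdf μ θ < 1) (v : ℝ × ℝ × ℝ) :
    ‖(Prod.fst ⁻¹' s).indicator (ipcwWeight (cdf μ)) v‖ ≤ (1 - cdf μ θ)⁻¹ := by
  unfold indicator
  split_ifs with hv
  · rw [Real.norm_of_nonneg (ipcwWeight_nonneg μ v)]
    exact ipcwWeight_le μ hθ (hsθ hv)
  · simpa using (sub_pos.2 hθ).le

/-- Unbiasedness of the oracle weight: `P(C ≥ z) = 1 - G(z-)` cancels the denominator. -/
lemma integral_ipcwWeight (μ : Measure ℝ) [IsProbabilityMeasure μ] {x y : ℝ}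
    (h : leftLim (cdf μ) (min x y) < 1) :
    ∫ c, ipcwWeight (cdf μ) (x, y, c) ∂μ = 1 := by
  have hw : ∀ c, ipcwWeight (cdf μ) (x, y, c)
      = (Ici (min x y)).indicator (fun _ => (1 - leftLim (cdf μ) (min x y))⁻¹) c := by
    intro c
    dsimp only [ipcwWeight]
    split_ifs with hc
    · rw [indicator_of_mem (mem_Ici.2 hc), min_eq_left hc, one_div]
    · rw [indicator_of_notMem (notMem_Ici.2 (not_le.1 hc)), zero_div]
  simp_rw [hw]
  rw [integral_indicator_const _ measurableSet_Ici, smul_eq_mul,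
    measureReal_Ici_eq_one_sub_leftLim_cdf, mul_inv_cancel₀ (by linarith)]

variable {Ω : Type*} [MeasurableSpace Ω] {P : Measure Ω}

lemma ae_tendsto_average_of_iid {E : Type*} [MeasurableSpace E] {V : ℕ → Ω → E}
    (hV : ∀ i, Measurable (V i)) (hindep : iIndepFun V P)
    (hident : ∀ i, P.map (V i) = P.map (V 0)) {φ : E → ℝ} (hφ : Measurable φ)
    (hint : Integrable (fun ω => φ (V 0 ω)) P) :
    ∀ᵐ ω ∂P, Tendsto (fun n : ℕ => (n : ℝ)⁻¹ * ∑ i ∈ Finset.range n, φ (V i ω)) atTop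
      (𝓝 (∫ ω, φ (V 0 ω) ∂P)) := by
  have := strong_law_ae_real (fun i ω => φ (V i ω)) hint
    (fun i j hij => (hindep.indepFun hij).comp hφ hφ)
    (fun i => (IdentDistrib.mk (hV i).aemeasurable (hV 0).aemeasurable (hident i)).comp hφ)
  simpa only [inv_mul_eq_div] using this

lemma indepFun_prodMk_of_iIndepFun_fin_three {β : Type*} [MeasurableSpace β] {X Y C : Ω → β}
    (hX : Measurable X) (hY : Measurable Y) (hC : Measurable C) (h : iIndepFun ![X, Y, C] P) :
    IndepFun (fun ω => (X ω, Y ω)) C P := by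
  have hmeas : ∀ i, Measurable (![X, Y, C] i) := by
    intro i
    fin_cases i <;> simpa
  simpa using h.indepFun_prodMk hmeas 0 1 2 (by decide) (by decide)

variable [IsProbabilityMeasure P]

lemma integral_indicator_ipcwWeight {X Y C : Ω → ℝ} (hX : Measurable X) (hY : Measurable Y)
    (hC : Measurable C) (hind : IndepFun (fun ω => (X ω, Y ω)) C P) {s : Set ℝ} {θ : ℝ}
    (hs : MeasurableSet s) (hsθ : s ⊆ Iic θ) (hθ : cdf (P.map C) θ < 1) :
    ∫ ω, (Prod.fst ⁻¹' s).indicator (ipcwWeight (cdf (P.map C))) (X ω, Y ω, C ω) ∂P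
      = P.real (X ⁻¹' s) := by
  set μC := P.map C
  have : IsProbabilityMeasure μC := Measure.isProbabilityMeasure_map hC.aemeasurable
  have hXY : Measurable fun ω => (X ω, Y ω) := hX.prodMk hY
  set ψ : (ℝ × ℝ) × ℝ → ℝ :=
    fun q => (Prod.fst ⁻¹' s).indicator (ipcwWeight (cdf μC)) (q.1.1, q.1.2, q.2)
  have hψ : Measurable ψ :=
    ((measurable_ipcwWeight (monotone_cdf μC)).indicator (measurable_fst hs)).comp (by fun_prop)
  have hψ_int : Integrable ψ ((P.map fun ω => (X ω, Y ω)).prod μC) :=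
    .of_bound hψ.aestronglyMeasurable _
      (.of_forall fun q => norm_indicator_ipcwWeight_le μC hsθ hθ _)
  have hinner : ∀ a : ℝ × ℝ, ∫ c, ψ (a, c) ∂μC = (Prod.fst ⁻¹' s).indicator 1 a := by
    rintro ⟨x, y⟩
    by_cases hx : x ∈ s
    · simp only [ψ, indicator_of_mem (show (x, y, _) ∈ Prod.fst ⁻¹' s from hx),
        indicator_of_mem (show (x, y) ∈ Prod.fst ⁻¹' s from hx), Pi.one_apply]
      refine integral_ipcwWeight μC (((monotone_cdf μC).leftLim_le ?_).trans_lt hθ)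
      exact (min_le_left x y).trans (hsθ hx)
    · simp [ψ, indicator_of_notMem (show (x, y, _) ∉ Prod.fst ⁻¹' s from hx),
        indicator_of_notMem (show (x, y) ∉ Prod.fst ⁻¹' s from hx)]
  calc ∫ ω, ψ ((X ω, Y ω), C ω) ∂P
      = ∫ q, ψ q ∂((P.map fun ω => (X ω, Y ω)).prod μC) := by
        rw [← (indepFun_iff_map_prod_eq_prod_map_map hXY.aemeasurable hC.aemeasurable).1 hind,
          integral_map (hXY.prodMk hC).aemeasurable hψ.aestronglyMeasurable]
    _ = ∫ a, (Prod.fst ⁻¹' s).indicator 1 a ∂(P.map fun ω => (X ω, Y ω)) := by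
        rw [integral_prod ψ hψ_int]
        simp_rw [hinner]
    _ = P.real (X ⁻¹' s) := by
        rw [integral_indicator_one (measurable_fst hs), map_measureReal_apply hXY
          (measurable_fst hs)]
        rfl

/-- The oracle IPCW estimate `(1/n) ∑_{i<n} 1_{xᵢ ∈ s} δᵢ / (1 - G(wᵢ-))` of `P(X ∈ s)`. -/
noncomputable def ipcwAverage (G : ℝ → ℝ) (v : ℕ → ℝ × ℝ × ℝ) (s : Set ℝ) (n : ℕ) : ℝ :=
  (n : ℝ)⁻¹ * ∑ i ∈ Finset.range n, (Prod.fst ⁻¹' s).indicator (ipcwWeight G) (v i)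

lemma ipcwAverage_mono (μ : Measure ℝ) (v : ℕ → ℝ × ℝ × ℝ) (n : ℕ) :
    Monotone fun s => ipcwAverage (cdf μ) v s n := fun _ _ hst =>
  mul_le_mul_of_nonneg_left (Finset.sum_le_sum fun i _ =>
    indicator_le_indicator_of_subset (preimage_mono hst) (ipcwWeight_nonneg μ) _) (by positivity)

section IidTriples

variable {X Y C : ℕ → Ω → ℝ} (hX : ∀ i, Measurable (X i)) (hY : ∀ i, Measurable (Y i))
  (hC : ∀ i, Measurable (C i)) (hiid : iIndepFun (fun i ω => (X i ω, Y i ω, C i ω)) P)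
  (hident : ∀ i, P.map (fun ω => (X i ω, Y i ω, C i ω)) = P.map (fun ω => (X 0 ω, Y 0 ω, C 0 ω)))
  (hind : IndepFun (fun ω => (X 0 ω, Y 0 ω)) (C 0) P)
include hX hY hC hiid hident hind

theorem ae_tendsto_ipcwAverage {s : Set ℝ} {θ : ℝ} (hs : MeasurableSet s) (hsθ : s ⊆ Iic θ)
    (hθ : cdf (P.map (C 0)) θ < 1) :
    ∀ᵐ ω ∂P, Tendsto (ipcwAverage (cdf (P.map (C 0))) (fun i => (X i ω, Y i ω, C i ω)) s)
      atTop (𝓝 (P.real (X 0 ⁻¹' s))) := by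
  have : IsProbabilityMeasure (P.map (C 0)) := Measure.isProbabilityMeasure_map (hC 0).aemeasurable
  have hφ := (measurable_ipcwWeight (monotone_cdf (P.map (C 0)))).indicator (measurable_fst hs)
  have hint : Integrable (fun ω => (Prod.fst ⁻¹' s).indicator (ipcwWeight (cdf (P.map (C 0))))
      (X 0 ω, Y 0 ω, C 0 ω)) P :=
    .of_bound (hφ.comp ((hX 0).prodMk ((hY 0).prodMk (hC 0)))).aestronglyMeasurable _
      (.of_forall fun ω => norm_indicator_ipcwWeight_le _ hsθ hθ _)
  have := ae_tendsto_average_of_iid (fun i => (hX i).prodMk ((hY i).prodMk (hC i))) hiid hident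
    hφ hint
  rwa [integral_indicator_ipcwWeight (hX 0) (hY 0) (hC 0) hind hs hsθ hθ] at this

theorem ae_tendsto_ipcwAverage_Iic_and_Iio {d θ : ℝ} (hd : d ≤ θ) (hθ : cdf (P.map (C 0)) θ < 1) :
    ∀ᵐ ω ∂P,
      Tendsto (ipcwAverage (cdf (P.map (C 0))) (fun i => (X i ω, Y i ω, C i ω)) (Iic d)) atTop
        (𝓝 (cdf (P.map (X 0)) d)) ∧
      Tendsto (ipcwAverage (cdf (P.map (C 0))) (fun i => (X i ω, Y i ω, C i ω)) (Iio d)) atTop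
        (𝓝 (leftLim (cdf (P.map (X 0))) d)) := by
  rw [cdf_map (hX 0), leftLim_cdf_map (hX 0)]
  exact (ae_tendsto_ipcwAverage hX hY hC hiid hident hind measurableSet_Iic
    (Iic_subset_Iic.2 hd) hθ).and (ae_tendsto_ipcwAverage hX hY hC hiid hident hind
    measurableSet_Iio (Iio_subset_Iic_self.trans (Iic_subset_Iic.2 hd)) hθ)

end IidTriples

end ProbabilityTheory

theorem oracle_ipcw_uniform_consistency_general
    {Ω : Type*} [MeasurableSpace Ω] (P : Measure Ω) [IsProbabilityMeasure P]
    (X Y C : ℕ → Ω → ℝ)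
    (hX : ∀ i, Measurable (X i)) (hY : ∀ i, Measurable (Y i)) (hC : ∀ i, Measurable (C i))
    -- the triples `(Xᵢ, Yᵢ, Cᵢ)` are iid
    (hiid : iIndepFun (fun i ω => (X i ω, Y i ω, C i ω)) P)
    (hident : ∀ i, Measure.map (fun ω => (X i ω, Y i ω, C i ω)) P
      = Measure.map (fun ω => (X 0 ω, Y 0 ω, C 0 ω)) P)
    -- entirely random contamination and right-censoring: `X`, `Y`, `C` mutually independent
    (hmut : iIndepFun ![X 0, Y 0, C 0] P)
    (W : ℕ → Ω → ℝ) (hW : ∀ i ω, W i ω = min (min (X i ω) (Y i ω)) (C i ω))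
    (δ : ℕ → Ω → ℝ) (hδ : ∀ i ω, δ i ω = if min (X i ω) (Y i ω) ≤ C i ω then 1 else 0)
    (F : ℝ → ℝ) (hF : ∀ t, F t = (P {ω | X 0 ω ≤ t}).toReal)
    (G : ℝ → ℝ) (hG : ∀ t, G t = (P {ω | C 0 ω ≤ t}).toReal)
    (H : ℝ → ℝ) (hH : ∀ t, H t = (P {ω | W 0 ω ≤ t}).toReal) :
    ∀ θ : ℝ, H θ < 1 →
      ∀ᵐ ω ∂P, Tendsto
        (fun n : ℕ => ⨆ t ∈ Icc (0 : ℝ) θ,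
          |(n : ℝ)⁻¹ * ∑ i ∈ Finset.range n,
              (if X i ω ≤ t then δ i ω / (1 - leftLim G (W i ω)) else 0) - F t|)
        atTop (𝓝 0) := by
  intro θ hHθ
  have hGθ : G θ < 1 := by
    refine lt_of_le_of_lt ?_ hHθ
    rw [hG, hH]
    refine ENNReal.toReal_mono (measure_ne_top P _) (measure_mono fun ω (hω : C 0 ω ≤ θ) => ?_)
    exact (hW 0 ω).trans_le ((min_le_right _ _).trans hω)
  obtain rfl : F = cdf (P.map (X 0)) := funext fun t => (hF t).trans (cdf_map (hX 0) t).symm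
  obtain rfl : G = cdf (P.map (C 0)) := funext fun t => (hG t).trans (cdf_map (hC 0) t).symm
  have hind := indepFun_prodMk_of_iIndepFun_fin_three (hX 0) (hY 0) (hC 0) hmut
  obtain ⟨D, hD, hDθ, hunif⟩ := (cdf (P.map (X 0))).exists_countable_tendstoUniformlyOn 0 θ
  have hae := (ae_ball_iff hD).2 fun d hd =>
    ae_tendsto_ipcwAverage_Iic_and_Iio hX hY hC hiid hident hind (hDθ hd).2 hGθ
  filter_upwards [hae] with ω hω
  set v : ℕ → ℝ × ℝ × ℝ := fun i => (X i ω, Y i ω, C i ω)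
  convert (hunif (fun n t => ipcwAverage (cdf (P.map (C 0))) v (Iic t) n)
    (fun n t => ipcwAverage (cdf (P.map (C 0))) v (Iio t) n)
    (fun n => (ipcwAverage_mono _ v n).comp monotone_Iic)
    (fun n t u htu => ipcwAverage_mono _ v n (Iic_subset_Iio.2 htu)) hω).tendsto_iSup_abs_sub
    using 6 with n t
  classical
  simp only [ipcwAverage, indicator_apply, mem_preimage, mem_Iic, ipcwWeight, hδ, hW, v]

/-- Lemma 3.4, oracle IPCW consistency with the true censoring cdf.
Under entirely random contamination and right-censoring, for every `θ` with `H(θ) < 1`,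
`sup_{0 ≤ t ≤ θ} |(1/n) ∑ᵢ 1_{Xᵢ ≤ t} δᵢ / (1 − G(Wᵢ−)) − F(t)| → 0` almost surely. -/
theorem oracle_ipcw_uniform_consistency
    {Ω : Type*} [MeasurableSpace Ω] (P : Measure Ω) [IsProbabilityMeasure P]
    (X Y C : ℕ → Ω → ℝ)
    (hX : ∀ i, Measurable (X i)) (hY : ∀ i, Measurable (Y i)) (hC : ∀ i, Measurable (C i))
    (hXnn : ∀ i ω, 0 ≤ X i ω) (hYnn : ∀ i ω, 0 ≤ Y i ω) (hCnn : ∀ i ω, 0 ≤ C i ω)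
    -- the triples `(Xᵢ, Yᵢ, Cᵢ)` are iid
    (hiid : iIndepFun (fun i ω => (X i ω, Y i ω, C i ω)) P)
    (hident : ∀ i, Measure.map (fun ω => (X i ω, Y i ω, C i ω)) P
      = Measure.map (fun ω => (X 0 ω, Y 0 ω, C 0 ω)) P)
    -- entirely random contamination and right-censoring: `X`, `Y`, `C` mutually independent
    (hmut : iIndepFun ![X 0, Y 0, C 0] P)
    (W : ℕ → Ω → ℝ) (hW : ∀ i ω, W i ω = min (min (X i ω) (Y i ω)) (C i ω))
    (δ : ℕ → Ω → ℝ) (hδ : ∀ i ω, δ i ω = if min (X i ω) (Y i ω) ≤ C i ω then 1 else 0)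
    (F : ℝ → ℝ) (hF : ∀ t, F t = (P {ω | X 0 ω ≤ t}).toReal)
    (G : ℝ → ℝ) (hG : ∀ t, G t = (P {ω | C 0 ω ≤ t}).toReal)
    (H : ℝ → ℝ) (hH : ∀ t, H t = (P {ω | W 0 ω ≤ t}).toReal) :
    ∀ θ : ℝ, H θ < 1 →
      ∀ᵐ ω ∂P, Tendsto
        (fun n : ℕ => ⨆ t ∈ Icc (0 : ℝ) θ,
          |(n : ℝ)⁻¹ * ∑ i ∈ Finset.range n,
              (if X i ω ≤ t then δ i ω / (1 - leftLim G (W i ω)) else 0) - F t|)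
        atTop (𝓝 0) :=
  oracle_ipcw_uniform_consistency_general P X Y C hX hY hC hiid hident hmut W hW δ hδ F hF G hG H hH
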